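/- arXiv:1011.2888 — 4 statements merged into one kernel-verified Lean document; each statement's English description precedes it below -/
import Mathlib

section
/- Let D ⊆ L([n]) be a Condorcet domain and let ν : D → ℤ₊ be a D-opinion whose total number of voters |ν| = Σ_{σ∈D} ν(σ) is odd. Then the simple-majority relation sm(ν) is a linear order on [n] (it is complete, asymmetric, and transitive). -/
/-- The set of linear orders on `{1,…,n}`, encoded as words (lists) listing the
alternatives from worst to best; such a word is a permutation of `1,2,…,n`. -/
def LinWords (n : ℕ) : Set (List ℕ) := {l | l.Perm (List.range' 1 n)}

/-- Linear orders on a finite ground set `X ⊆ ℕ`, encoded as words. -/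
def LinWordsOn (X : Finset ℕ) : Set (List ℕ) := {l | l.Perm (X.sort (· ≤ ·))}

/-- `ltIn σ i j` : `i` occurs before (i.e. is worse than) `j` in the word `σ`;
this is the relation `i <_σ j`. -/
def ltIn (σ : List ℕ) (i j : ℕ) : Prop := σ.idxOf i < σ.idxOf j

instance (σ : List ℕ) (i j : ℕ) : Decidable (ltIn σ i j) :=
  inferInstanceAs (Decidable (σ.idxOf i < σ.idxOf j))

/-- Three orders in `D` whose restrictions to `{i,j,k}` are exactly the three
cyclic patterns `i<j<k`, `j<k<i`, `k<i<j`. -/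
def CyclicTriple (D : Set (List ℕ)) (i j k : ℕ) : Prop :=
  ∃ σ₁ ∈ D, ∃ σ₂ ∈ D, ∃ σ₃ ∈ D,
    (ltIn σ₁ i j ∧ ltIn σ₁ j k) ∧ (ltIn σ₂ j k ∧ ltIn σ₂ k i) ∧ (ltIn σ₃ k i ∧ ltIn σ₃ i j)

/-- `D` is cyclic: some three distinct alternatives and three orders of `D`
restrict to `{i,j,k}` as `{ijk, jki, kij}` or as `{kji, jik, ikj}`. -/
def IsCyclicDom (D : Set (List ℕ)) : Prop :=
  ∃ i j k : ℕ, i ≠ j ∧ j ≠ k ∧ i ≠ k ∧ (CyclicTriple D i j k ∨ CyclicTriple D k j i)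

/-- On the triple `i<j<k`, in every order of `D` the alternative `j` is never the worst. -/
def PeakCond (D : Set (List ℕ)) (i j k : ℕ) : Prop :=
  ∀ σ ∈ D, ¬ (ltIn σ j i ∧ ltIn σ j k)

/-- On the triple `i<j<k`, in every order of `D` the alternative `j` is never the best. -/
def PitCond (D : Set (List ℕ)) (i j k : ℕ) : Prop :=
  ∀ σ ∈ D, ¬ (ltIn σ i j ∧ ltIn σ k j)

/-- `D` is a peak-pit domain: every triple `i<j<k` in `[n]` satisfies the peak
condition or the pit condition. -/
def IsPeakPit (n : ℕ) (D : Set (List ℕ)) : Prop :=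
  ∀ i j k : ℕ, 1 ≤ i → i < j → j < k → k ≤ n → (PeakCond D i j k ∨ PitCond D i j k)

/-- The four symbols a casting can assign to a triple. -/
inductive Symb | peak | pit | right | left

/-- Membership of (the restriction of) `σ` in the four-element domain `D₃(s)` on
the triple `i<j<k`: for `∩`, `j` is not worst; for `∪`, `j` is not best; for `→`,
`k` is not middle; for `←`, `i` is not middle. -/
def TripleCond : Symb → List ℕ → ℕ → ℕ → ℕ → Prop
  | Symb.peak, σ, i, j, k => ¬ (ltIn σ j i ∧ ltIn σ j k)
  | Symb.pit,  σ, i, j, k => ¬ (ltIn σ i j ∧ ltIn σ k j)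
  | Symb.right, σ, i, j, k => ¬ ((ltIn σ i k ∧ ltIn σ k j) ∨ (ltIn σ j k ∧ ltIn σ k i))
  | Symb.left,  σ, i, j, k => ¬ ((ltIn σ j i ∧ ltIn σ i k) ∨ (ltIn σ k i ∧ ltIn σ i j))

/-- The domain `D(c)` of a casting `c`: all linear orders on `[n]` whose restriction
to every triple `i<j<k` lies in `D₃(c i j k)`. -/
def CastDomain (n : ℕ) (c : ℕ → ℕ → ℕ → Symb) : Set (List ℕ) :=
  {σ | σ ∈ LinWords n ∧ ∀ i j k : ℕ, 1 ≤ i → i < j → j < k → k ≤ n → TripleCond (c i j k) σ i j k}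

/-- The set of inversions of a word `σ`: pairs `(i,j)` of alternatives of `σ`
with `i < j` as integers and `j <_σ i`. -/
def InvPairs (σ : List ℕ) : Set (ℕ × ℕ) :=
  {p | p.1 ∈ σ ∧ p.2 ∈ σ ∧ p.1 < p.2 ∧ ltIn σ p.2 p.1}

/-- `τ` covers `σ` in the weak Bruhat order: `InvPairs τ` is `InvPairs σ` plus exactly one pair. -/
def Covers (τ σ : List ℕ) : Prop :=
  ∃ p : ℕ × ℕ, p ∉ InvPairs σ ∧ InvPairs τ = insert p (InvPairs σ)

/-- Adjacency in the Bruhat graph. -/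
def BruhatAdj (σ τ : List ℕ) : Prop := Covers τ σ ∨ Covers σ τ

/-- A path in the Bruhat graph from `σ` to `τ` all of whose vertices lie in `D`. -/
def PathIn (D : Set (List ℕ)) (σ τ : List ℕ) : Prop :=
  ∃ (m : ℕ) (f : ℕ → List ℕ), f 0 = σ ∧ f m = τ ∧
    (∀ t ≤ m, f t ∈ D) ∧ ∀ t < m, BruhatAdj (f t) (f (t + 1))

/-- `D` is semi-connected (ground set `[n]`): it contains the increasing order `α`
and the decreasing order `ω` and a Bruhat path from `α` to `ω` inside `D`. -/
def SemiConnected (n : ℕ) (D : Set (List ℕ)) : Prop :=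
  List.range' 1 n ∈ D ∧ (List.range' 1 n).reverse ∈ D ∧
    PathIn D (List.range' 1 n) (List.range' 1 n).reverse

/-- `D` is semi-connected on the ground set `X`. -/
def SemiConnectedOn (X : Finset ℕ) (D : Set (List ℕ)) : Prop :=
  X.sort (· ≤ ·) ∈ D ∧ (X.sort (· ≤ ·)).reverse ∈ D ∧
    PathIn D (X.sort (· ≤ ·)) (X.sort (· ≤ ·)).reverse

/-- `A` is an ideal of the order `σ`: a downward-closed (w.r.t. `<_σ`) set of
alternatives of `σ`, i.e. an initial segment of the word `σ`. -/
def IsIdeal (σ : List ℕ) (A : Set ℕ) : Prop :=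
  (∀ x ∈ A, x ∈ σ) ∧ ∀ x ∈ A, ∀ y ∈ σ, ltIn σ y x → y ∈ A

/-- The set system of all ideals of `σ`. -/
def IdSet (σ : List ℕ) : Set (Set ℕ) := {A | IsIdeal σ A}

/-- The convex hull of a set of naturals: the minimal integer interval containing it. -/
def hull (S : Set ℕ) : Set ℕ := {x | ∃ a ∈ S, ∃ b ∈ S, a ≤ x ∧ x ≤ b}

/-- `A` and `B` are separated: the convex hulls of `A \ B` and `B \ A` are disjoint. -/
def Separated (A B : Set ℕ) : Prop := Disjoint (hull (A \ B)) (hull (B \ A))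

/-- A separated set system: any two members are separated. -/
def SepSystem (𝒳 : Set (Set ℕ)) : Prop := ∀ A ∈ 𝒳, ∀ B ∈ 𝒳, Separated A B

/-- The concatenation `σ * τ` of a word on `[n]` with a word on `[n']`, the latter
shifted by `n`. -/
def concatWord (n : ℕ) (σ τ : List ℕ) : List ℕ := σ ++ τ.map (· + n)

/-- The concatenation `{σ * τ : σ ∈ D, τ ∈ D'}` of two domains. -/
def ConcatDomain (n : ℕ) (D D' : Set (List ℕ)) : Set (List ℕ) :=
  {l | ∃ σ ∈ D, ∃ τ ∈ D', l = concatWord n σ τ}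

/-- The simple-majority relation `i sm(ν) j` for an opinion `ν` on the finite domain `D`. -/
def SM (D : Finset (List ℕ)) (ν : List ℕ → ℕ) (i j : ℕ) : Prop :=
  (∑ σ ∈ D, if ltIn σ j i then ν σ else 0) > (∑ σ ∈ D, if ltIn σ i j then ν σ else 0)

/-- Fishburn's domain (the alternating scheme): for each triple `i<j<k`, if `j` is
even then `j` is not the worst of `{i,j,k}`, and if `j` is odd then `j` is not the best. -/
def Fishburn (n : ℕ) : Set (List ℕ) :=
  {σ | σ ∈ LinWords n ∧ ∀ i j k : ℕ, 1 ≤ i → i < j → j < k → k ≤ n →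
    (Even j → ¬ (ltIn σ j i ∧ ltIn σ j k)) ∧ (Odd j → ¬ (ltIn σ i j ∧ ltIn σ k j))}

/-- `γ n`: the maximum cardinality of a peak-pit domain in `L([n])`. -/
noncomputable def gamma (n : ℕ) : ℕ :=
  sSup {m | ∃ D : Set (List ℕ), D ⊆ LinWords n ∧ IsPeakPit n D ∧ D.ncard = m}


/-!
Asymmetry is immediate. Completeness: every voter ranks `i` and `j` strictly, so the two
vote counts add up to the odd total and cannot be equal. Transitivity: if majority had a
cycle `i ≻ j ≻ k ≻ i`, then adding the margins of `i ≻ j` and `j ≻ k` shows that the pattern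
`k < j < i` gets more votes than `i < j < k`, hence occurs in `D`; by symmetry the same holds for
`j < i < k` and `i < k < j`, and these three orders witness that `D` is cyclic.
-/

lemma mem_of_mem_linWords {n i : ℕ} {σ : List ℕ} (hσ : σ ∈ LinWords n)
    (hi : i ∈ Finset.Icc 1 n) : i ∈ σ := by
  rw [Finset.mem_Icc] at hi
  exact (show σ.Perm (List.range' 1 n) from hσ).mem_iff.2 (List.mem_range'_1.2 ⟨hi.1, by omega⟩)

lemma idxOf_ne_idxOf {σ : List ℕ} {i j : ℕ} (hi : i ∈ σ) (hij : i ≠ j) :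
    σ.idxOf i ≠ σ.idxOf j :=
  fun h => hij ((List.idxOf_inj hi).1 h)

lemma Finset.exists_mem_of_sum_ite_pos {α : Type*} {s : Finset α} {P : α → Prop}
    [DecidablePred P] {f : α → ℕ} (h : 0 < ∑ a ∈ s, if P a then f a else 0) :
    ∃ a ∈ s, P a := by
  obtain ⟨a, ha, hne⟩ := Finset.exists_ne_zero_of_sum_ne_zero h.ne'
  exact ⟨a, ha, by_contra fun hP => hne (if_neg hP)⟩

section Majority

variable {D : Finset (List ℕ)} {ν : List ℕ → ℕ} {i j k : ℕ}

lemma SM.irrefl (i : ℕ) : ¬ SM D ν i i := lt_irrefl _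

lemma SM.asymm (h : SM D ν i j) : ¬ SM D ν j i := lt_asymm h

lemma SM.ne (h : SM D ν i j) : i ≠ j := by
  rintro rfl
  exact SM.irrefl i h

lemma sum_ite_ltIn_add_sum_ite_ltIn (hi : ∀ σ ∈ D, i ∈ σ) (hij : i ≠ j) :
    (∑ σ ∈ D, if ltIn σ j i then ν σ else 0) + (∑ σ ∈ D, if ltIn σ i j then ν σ else 0) =
      ∑ σ ∈ D, ν σ := by
  rw [← Finset.sum_add_distrib]
  refine Finset.sum_congr rfl fun σ hσ => ?_
  have := idxOf_ne_idxOf (hi σ hσ) hij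
  split_ifs <;> simp only [ltIn] at * <;> omega

lemma SM_or_SM_of_odd (hi : ∀ σ ∈ D, i ∈ σ) (hij : i ≠ j) (hodd : Odd (∑ σ ∈ D, ν σ)) :
    SM D ν i j ∨ SM D ν j i := by
  have hsum := sum_ite_ltIn_add_sum_ite_ltIn (ν := ν) hi hij
  obtain ⟨m, hm⟩ := hodd
  unfold SM
  omega

/-- Summing the margins of `i ≻ j` and `j ≻ k` voter by voter, every order of `{i, j, k}`
contributes `0` except `k < j < i` (`+2`) and `i < j < k` (`-2`). -/
lemma SM.sum_ite_desc_gt_sum_ite_asc (hi : ∀ σ ∈ D, i ∈ σ) (hj : ∀ σ ∈ D, j ∈ σ)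
    (hij : SM D ν i j) (hjk : SM D ν j k) :
    (∑ σ ∈ D, if ltIn σ i j ∧ ltIn σ j k then ν σ else 0) <
      ∑ σ ∈ D, if ltIn σ k j ∧ ltIn σ j i then ν σ else 0 := by
  have hik : i ≠ k := by
    rintro rfl
    exact hij.asymm hjk
  have hmargins :
      ((∑ σ ∈ D, if ltIn σ j i then ν σ else 0) + (∑ σ ∈ D, if ltIn σ k j then ν σ else 0)) +
          2 * (∑ σ ∈ D, if ltIn σ i j ∧ ltIn σ j k then ν σ else 0) =
        ((∑ σ ∈ D, if ltIn σ i j then ν σ else 0) + (∑ σ ∈ D, if ltIn σ j k then ν σ else 0)) +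
          2 * (∑ σ ∈ D, if ltIn σ k j ∧ ltIn σ j i then ν σ else 0) := by
    simp only [Finset.mul_sum, ← Finset.sum_add_distrib]
    refine Finset.sum_congr rfl fun σ hσ => ?_
    have := idxOf_ne_idxOf (hi σ hσ) hij.ne
    have := idxOf_ne_idxOf (hi σ hσ) hik
    have := idxOf_ne_idxOf (hj σ hσ) hjk.ne
    split_ifs <;> simp only [ltIn] at * <;> omega
  unfold SM at hij hjk
  omega

lemma cyclicTriple_of_SM_cycle (hi : ∀ σ ∈ D, i ∈ σ) (hj : ∀ σ ∈ D, j ∈ σ)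
    (hk : ∀ σ ∈ D, k ∈ σ) (hij : SM D ν i j) (hjk : SM D ν j k) (hki : SM D ν k i) :
    CyclicTriple ↑D k j i := by
  obtain ⟨σ₁, h₁, p₁⟩ := Finset.exists_mem_of_sum_ite_pos
    ((Nat.zero_le _).trans_lt (SM.sum_ite_desc_gt_sum_ite_asc hi hj hij hjk))
  obtain ⟨σ₂, h₂, p₂⟩ := Finset.exists_mem_of_sum_ite_pos
    ((Nat.zero_le _).trans_lt (SM.sum_ite_desc_gt_sum_ite_asc hk hi hki hij))
  obtain ⟨σ₃, h₃, p₃⟩ := Finset.exists_mem_of_sum_ite_pos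
    ((Nat.zero_le _).trans_lt (SM.sum_ite_desc_gt_sum_ite_asc hj hk hjk hki))
  exact ⟨σ₁, h₁, σ₂, h₂, σ₃, h₃, p₁, p₂, p₃⟩

end Majority

/-- for a Condorcet domain `D` and a `D`-opinion `ν` with an odd total
number of voters, the simple-majority relation `sm(ν)` is a linear order on `[n]`:
complete, asymmetric and transitive. -/
theorem statement_2 (n : ℕ) (D : Finset (List ℕ)) (hD : ↑D ⊆ LinWords n)
    (hCD : ¬ IsCyclicDom ↑D) (ν : List ℕ → ℕ) (hodd : Odd (∑ σ ∈ D, ν σ)) :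
    (∀ i ∈ Finset.Icc 1 n, ∀ j ∈ Finset.Icc 1 n, i ≠ j → (SM D ν i j ∨ SM D ν j i)) ∧
    (∀ i j : ℕ, SM D ν i j → ¬ SM D ν j i) ∧
    (∀ i ∈ Finset.Icc 1 n, ∀ j ∈ Finset.Icc 1 n, ∀ k ∈ Finset.Icc 1 n,
      SM D ν i j → SM D ν j k → SM D ν i k) := by
  have hmem : ∀ i ∈ Finset.Icc 1 n, ∀ σ ∈ D, i ∈ σ := fun i hi σ hσ =>
    mem_of_mem_linWords (hD hσ) hi
  refine ⟨fun i hi j _ hij => SM_or_SM_of_odd (hmem i hi) hij hodd,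
    fun i j h => h.asymm, ?_⟩
  intro i hi j hj k hk hij hjk
  by_contra hik
  have hik_ne : i ≠ k := by
    rintro rfl
    exact hij.asymm hjk
  have hki : SM D ν k i := (SM_or_SM_of_odd (hmem i hi) hik_ne hodd).resolve_left hik
  exact hCD ⟨i, j, k, hij.ne, hjk.ne, hik_ne, Or.inr
    (cyclicTriple_of_SM_cycle (hmem i hi) (hmem j hj) (hmem k hk) hij hjk hki)⟩
end

section
/- Semi-connectedness is preserved under deleting an alternative: if D ⊆ L([n]) is semi-connected and i ∈ [n], then the set of restrictions {σ restricted to [n]\{i} : σ ∈ D} is a semi-connected set of linear orders on [n]\{i} (with respect to the natural order 1<2<...<i-1<i+1<...<n, its reversal, and the Bruhat graph on linear orders of [n]\{i}). -/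
/-! Deleting `i` sends each Bruhat edge `σ — τ` either to a single vertex or to a Bruhat edge:
the inversions of a restricted word are the inversions of the word avoiding `i`, so the one
inversion separating `σ` from `τ` is either kept or forgotten. Hence the image of a Bruhat path
from `α` to `ω` is, after dropping repetitions, a Bruhat path between the increasing and the
decreasing order on `[n] \ {i}`. -/

open List

section ltIn

variable {σ : List ℕ} {a b : ℕ}

lemma ltIn_asymm (h : ltIn σ a b) : ¬ ltIn σ b a :=
  Nat.lt_asymm h

lemma ltIn_or_ltIn (ha : a ∈ σ) (hab : a ≠ b) : ltIn σ a b ∨ ltIn σ b a :=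
  Nat.lt_or_gt_of_ne fun e => hab ((idxOf_inj ha).1 e)

lemma not_ltIn_iff (ha : a ∈ σ) (hab : a ≠ b) : ¬ ltIn σ b a ↔ ltIn σ a b :=
  ⟨fun h => (ltIn_or_ltIn ha hab).resolve_right h, ltIn_asymm⟩

lemma pairwise_ltIn (hσ : σ.Nodup) : σ.Pairwise (ltIn σ) :=
  pairwise_iff_getElem.2 fun i j _ _ hij => by
    simpa only [ltIn, hσ.idxOf_getElem] using hij

lemma List.Pairwise.rel_of_ltIn {R : ℕ → ℕ → Prop} (h : σ.Pairwise R) (hb : b ∈ σ)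
    (hab : ltIn σ a b) : R a b := by
  have hbσ := idxOf_lt_length_of_mem hb
  have := pairwise_iff_getElem.1 h _ _ (hab.trans hbσ) hbσ hab
  rwa [getElem_idxOf, getElem_idxOf] at this

lemma ltIn_iff_of_sublist {l : List ℕ} (h : l <+ σ) (hσ : σ.Nodup) (ha : a ∈ l) (hb : b ∈ l) :
    ltIn l a b ↔ ltIn σ a b := by
  have hmono : ∀ {x y}, y ∈ l → ltIn l x y → ltIn σ x y := fun hy hxy =>
    ((pairwise_ltIn hσ).sublist h).rel_of_ltIn hy hxy
  refine ⟨hmono hb, fun hab => ?_⟩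
  have hne : a ≠ b := by
    rintro rfl
    exact lt_irrefl _ hab
  exact (ltIn_or_ltIn ha hne).resolve_right fun hba => ltIn_asymm hab (hmono ha hba)

lemma eq_of_perm_of_ltIn_iff {τ : List ℕ} (hστ : σ ~ τ) (hσ : σ.Nodup)
    (h : ∀ a ∈ σ, ∀ b ∈ σ, ltIn σ a b ↔ ltIn τ a b) : σ = τ := by
  refine hστ.eq_of_pairwise (fun _ _ _ _ hab hba => absurd hba (ltIn_asymm hab))
    (pairwise_ltIn hσ) ?_
  exact (pairwise_ltIn (hστ.nodup_iff.1 hσ)).imp_of_mem fun ha hb hab =>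
    (h _ (hστ.mem_iff.2 ha) _ (hστ.mem_iff.2 hb)).2 hab

end ltIn

section InvPairs

variable {σ τ : List ℕ}

lemma mem_invPairs_iff {a b : ℕ} (ha : a ∈ σ) (hb : b ∈ σ) (hab : a < b) :
    (a, b) ∈ InvPairs σ ↔ ltIn σ b a := by
  simp [InvPairs, ha, hb, hab]

lemma eq_of_invPairs_eq (hστ : σ ~ τ) (hσ : σ.Nodup) (h : InvPairs σ = InvPairs τ) :
    σ = τ := by
  refine eq_of_perm_of_ltIn_iff hστ hσ fun a ha b hb => ?_
  have haτ := hστ.subset ha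
  have hbτ := hστ.subset hb
  rcases lt_trichotomy a b with hab | rfl | hab
  · rw [← not_ltIn_iff ha hab.ne, ← not_ltIn_iff haτ hab.ne, ← mem_invPairs_iff ha hb hab,
      ← mem_invPairs_iff haτ hbτ hab, h]
  · exact iff_of_false (lt_irrefl _) (lt_irrefl _)
  · rw [← mem_invPairs_iff hb ha hab, ← mem_invPairs_iff hbτ haτ hab, h]

lemma invPairs_filter (hσ : σ.Nodup) (p : ℕ → Bool) :
    InvPairs (σ.filter p) = {q ∈ InvPairs σ | p q.1 ∧ p q.2} := by
  ext ⟨a, b⟩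
  simp only [InvPairs, Set.mem_ofPred_eq, mem_filter]
  by_cases hmem : (a ∈ σ ∧ p a) ∧ (b ∈ σ ∧ p b)
  · rw [ltIn_iff_of_sublist filter_sublist hσ (mem_filter.2 hmem.2) (mem_filter.2 hmem.1)]
    tauto
  · tauto

lemma Covers.filter_eq_or_covers (h : Covers τ σ) (hστ : σ ~ τ) (hσ : σ.Nodup)
    (p : ℕ → Bool) : σ.filter p = τ.filter p ∨ Covers (τ.filter p) (σ.filter p) := by
  obtain ⟨q, hq, hτσ⟩ := h
  have hfilter : InvPairs (τ.filter p) = {r ∈ insert q (InvPairs σ) | p r.1 ∧ p r.2} := by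
    rw [invPairs_filter (hστ.nodup_iff.1 hσ), hτσ]
  by_cases hpq : p q.1 ∧ p q.2
  · refine Or.inr ⟨q, fun hq' => hq ((invPairs_filter hσ p).subset hq').1, ?_⟩
    rw [hfilter, invPairs_filter hσ]
    ext r
    simp only [Set.mem_ofPred_eq, Set.mem_insert_iff]
    constructor
    · rintro ⟨rfl | hr, hpr⟩ <;> tauto
    · rintro (rfl | hr) <;> tauto
  · refine Or.inl (eq_of_invPairs_eq (hστ.filter p) (hσ.filter p) ?_)
    rw [hfilter, invPairs_filter hσ]
    ext r
    simp only [Set.mem_ofPred_eq, Set.mem_insert_iff]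
    constructor
    · tauto
    · rintro ⟨rfl | hr, hpr⟩ <;> tauto

lemma BruhatAdj.filter_eq_or_bruhatAdj (h : BruhatAdj σ τ) (hστ : σ ~ τ) (hσ : σ.Nodup)
    (p : ℕ → Bool) : σ.filter p = τ.filter p ∨ BruhatAdj (σ.filter p) (τ.filter p) := by
  rcases h with h | h
  · exact (h.filter_eq_or_covers hστ hσ p).imp id Or.inl
  · exact (h.filter_eq_or_covers hστ.symm (hστ.nodup_iff.1 hσ) p).imp Eq.symm Or.inr

end InvPairs

section PathIn

def BruhatAdjIn (D : Set (List ℕ)) (σ τ : List ℕ) : Prop := σ ∈ D ∧ τ ∈ D ∧ BruhatAdj σ τ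

variable {D : Set (List ℕ)} {σ τ : List ℕ}

lemma pathIn_iff_reflTransGen :
    PathIn D σ τ ↔ σ ∈ D ∧ Relation.ReflTransGen (BruhatAdjIn D) σ τ := by
  constructor
  · rintro ⟨m, f, rfl, rfl, hD, hadj⟩
    refine ⟨hD 0 m.zero_le, ?_⟩
    have hprefix : ∀ t ≤ m, Relation.ReflTransGen (BruhatAdjIn D) (f 0) (f t) := by
      intro t
      induction t with
      | zero => exact fun _ => .refl
      | succ t ih => exact fun ht =>
          (ih (by omega)).tail ⟨hD t (by omega), hD (t + 1) ht, hadj t (by omega)⟩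
    exact hprefix m le_rfl
  · rintro ⟨hσ, h⟩
    induction h with
    | refl => exact ⟨0, fun _ => σ, rfl, rfl, fun _ _ => hσ, fun t h => absurd h t.not_lt_zero⟩
    | @tail ρ ρ' _ hρρ' ih =>
      obtain ⟨m, f, hf0, hfm, hD, hadj⟩ := ih
      refine ⟨m + 1, fun t => if t ≤ m then f t else ρ', by simp [hf0], by simp, ?_, ?_⟩
      · intro t _
        dsimp only
        split_ifs with ht
        exacts [hD t ht, hρρ'.2.1]
      · intro t ht
        rcases Nat.lt_or_ge t m with ht' | ht'
        · simpa [ht'.le, Nat.succ_le_of_lt ht'] using hadj t ht'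
        · obtain rfl : t = m := by omega
          simpa [hfm] using hρρ'.2.2

lemma PathIn.image {g : List ℕ → List ℕ}
    (hg : ∀ σ ∈ D, ∀ τ ∈ D, BruhatAdj σ τ → g σ = g τ ∨ BruhatAdj (g σ) (g τ))
    (h : PathIn D σ τ) : PathIn (g '' D) (g σ) (g τ) := by
  rw [pathIn_iff_reflTransGen] at h ⊢
  refine ⟨Set.mem_image_of_mem g h.1, Relation.ReflTransGen.lift' g ?_ _ _ h.2⟩
  rintro a b ⟨ha, hb, hab⟩
  rcases hg a ha b hb hab with he | hadj
  · rw [Function.onFun, he]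
  · exact .single ⟨Set.mem_image_of_mem g ha, Set.mem_image_of_mem g hb, hadj⟩

end PathIn

lemma Finset.sort_filter_ne (X : Finset ℕ) (i : ℕ) :
    (X.sort (· ≤ ·)).filter (fun x => decide (x ≠ i)) = (X.erase i).sort (· ≤ ·) := by
  refine Perm.eq_of_pairwise' ((X.pairwise_sort _).sublist filter_sublist)
    ((X.erase i).pairwise_sort _) ?_
  rw [perm_ext_iff_of_nodup ((X.sort_nodup _).filter _) ((X.erase i).sort_nodup _)]
  intro x
  simp [and_comm]

section Restriction

variable {X : Finset ℕ} {D : Set (List ℕ)}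

lemma image_filter_ne_subset_linWordsOn (hD : D ⊆ LinWordsOn X) (i : ℕ) :
    (fun l : List ℕ => l.filter (fun x => decide (x ≠ i))) '' D ⊆ LinWordsOn (X.erase i) := by
  rintro _ ⟨σ, hσ, rfl⟩
  show (σ.filter _).Perm _
  rw [← X.sort_filter_ne i]
  exact (hD hσ).filter _

lemma SemiConnectedOn.image_filter_ne (hsc : SemiConnectedOn X D) (hD : D ⊆ LinWordsOn X)
    (i : ℕ) : SemiConnectedOn (X.erase i)
      ((fun l : List ℕ => l.filter (fun x => decide (x ≠ i))) '' D) := by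
  obtain ⟨hα, hω, hpath⟩ := hsc
  have hα' := X.sort_filter_ne i
  have hω' : (X.sort (· ≤ ·)).reverse.filter (fun x => decide (x ≠ i)) =
      ((X.erase i).sort (· ≤ ·)).reverse := by
    rw [filter_reverse, hα']
  refine ⟨⟨_, hα, hα'⟩, ⟨_, hω, hω'⟩, ?_⟩
  have hrestrict := hpath.image (g := fun l => l.filter (fun x => decide (x ≠ i)))
    fun σ hσ τ hτ hστ => hστ.filter_eq_or_bruhatAdj ((hD hσ).trans (hD hτ).symm)
      ((hD hσ).nodup_iff.2 (X.sort_nodup _)) _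
  rwa [hα', hω'] at hrestrict

end Restriction

theorem statement_6_general (n i : ℕ) (D : Set (List ℕ))
    (hD : D ⊆ LinWordsOn (Finset.Icc 1 n))
    (hsc : SemiConnectedOn (Finset.Icc 1 n) D) :
    ((fun l : List ℕ => l.filter (fun x => decide (x ≠ i))) '' D)
        ⊆ LinWordsOn ((Finset.Icc 1 n).erase i) ∧
    SemiConnectedOn ((Finset.Icc 1 n).erase i)
      ((fun l : List ℕ => l.filter (fun x => decide (x ≠ i))) '' D) :=
  ⟨image_filter_ne_subset_linWordsOn hD i, hsc.image_filter_ne hD i⟩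

/-- semi-connectedness is preserved under deleting an alternative `i`:
the set of restrictions of a semi-connected `D ⊆ L([n])` to `[n] \ {i}` is a
semi-connected set of linear orders on `[n] \ {i}`. -/
theorem statement_6 (n i : ℕ) (hi : i ∈ Finset.Icc 1 n) (D : Set (List ℕ))
    (hD : D ⊆ LinWordsOn (Finset.Icc 1 n))
    (hsc : SemiConnectedOn (Finset.Icc 1 n) D) :
    ((fun l : List ℕ => l.filter (fun x => decide (x ≠ i))) '' D)
        ⊆ LinWordsOn ((Finset.Icc 1 n).erase i) ∧
    SemiConnectedOn ((Finset.Icc 1 n).erase i)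
      ((fun l : List ℕ => l.filter (fun x => decide (x ≠ i))) '' D) :=
  statement_6_general n i D hD hsc
end

section
/- Let γ_n denote the maximum cardinality of a peak-pit domain in L([n]). Then for all n, n' ≥ 1, γ_n · γ_{n'} ≤ γ_{n+n'}. -/
/-! Concatenating a peak-pit domain on `[n]` with one on `[n']` shifted by `n` gives a peak-pit
domain on `[n + n']` of product size; a triple inside one block inherits its condition from
that block. -/

theorem linWords_finite (n : ℕ) : (LinWords n).Finite := by
  have h : LinWords n = {l | l ∈ (List.range' 1 n).permutations} := by
    ext l; simp [LinWords, List.mem_permutations]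
  rw [h]; exact (List.range' 1 n).permutations.finite_toSet

theorem mem_iff_of_mem_linWords {n : ℕ} {σ : List ℕ} (h : σ ∈ LinWords n) {x : ℕ} :
    x ∈ σ ↔ 1 ≤ x ∧ x ≤ n := by
  rw [List.Perm.mem_iff h, List.mem_range'_1]; omega

theorem length_of_mem_linWords {n : ℕ} {σ : List ℕ} (h : σ ∈ LinWords n) : σ.length = n := by
  simpa using List.Perm.length_eq h

theorem List.idxOf_map_of_injective {α β : Type*} [DecidableEq α] [DecidableEq β] {f : α → β}
    (hf : Function.Injective f) (l : List α) (a : α) : (l.map f).idxOf (f a) = l.idxOf a := by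
  induction l with
  | nil => simp
  | cons x xs ih => by_cases hx : x = a <;> simp [ih, hx, hf.eq_iff]

section Concat

variable {n n' : ℕ} {σ τ : List ℕ}

theorem concatWord_mem_linWords (hσ : σ ∈ LinWords n) (hτ : τ ∈ LinWords n') :
    concatWord n σ τ ∈ LinWords (n + n') := by
  have hτ_shift : (τ.map (· + n)).Perm (List.range' (n + 1) n') := by
    rw [show (· + n) = (n + ·) by funext a; omega, ← List.map_add_range' (a := n) 1 n' 1]
    exact hτ.map _
  have happ : List.range' 1 n ++ List.range' (n + 1) n' = List.range' 1 (n + n') := by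
    simpa [add_comm] using List.range'_append (s := 1) (m := n) (n := n') (step := 1)
  simpa only [concatWord, LinWords, Set.mem_ofPred_eq, happ] using hσ.append hτ_shift

theorem ltIn_concatWord_of_le (hσ : σ ∈ LinWords n) {a b : ℕ}
    (ha : 1 ≤ a) (han : a ≤ n) (hb : 1 ≤ b) (hbn : b ≤ n) :
    ltIn (concatWord n σ τ) a b ↔ ltIn σ a b := by
  unfold ltIn concatWord
  rw [List.idxOf_append_of_mem ((mem_iff_of_mem_linWords hσ).2 ⟨ha, han⟩),
    List.idxOf_append_of_mem ((mem_iff_of_mem_linWords hσ).2 ⟨hb, hbn⟩)]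

theorem ltIn_concatWord_of_lt (hσ : σ ∈ LinWords n) {a b : ℕ} (ha : n < a) (hb : n < b) :
    ltIn (concatWord n σ τ) a b ↔ ltIn τ (a - n) (b - n) := by
  have hinj : Function.Injective (· + n) := add_left_injective n
  have hshift : ∀ x, n < x → (τ.map (· + n)).idxOf x = τ.idxOf (x - n) := fun x hx => by
    conv_lhs => rw [show x = x - n + n by omega]
    exact List.idxOf_map_of_injective hinj τ (x - n)
  have hnotMem : ∀ x, n < x → x ∉ σ := fun x hx h => by
    have := (mem_iff_of_mem_linWords hσ).1 h; omega
  unfold ltIn concatWord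
  rw [List.idxOf_append_of_notMem (hnotMem a ha), List.idxOf_append_of_notMem (hnotMem b hb),
    hshift a ha, hshift b hb]
  omega

theorem not_ltIn_concatWord_of_le_of_lt (hσ : σ ∈ LinWords n) {a b : ℕ}
    (ha : 1 ≤ a) (han : a ≤ n) (hb : n < b) : ¬ ltIn (concatWord n σ τ) b a := by
  have haσ : a ∈ σ := (mem_iff_of_mem_linWords hσ).2 ⟨ha, han⟩
  have hbσ : b ∉ σ := fun h => by have := (mem_iff_of_mem_linWords hσ).1 h; omega
  unfold ltIn concatWord
  rw [List.idxOf_append_of_mem haσ, List.idxOf_append_of_notMem hbσ]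
  have := List.idxOf_lt_length_iff.mpr haσ
  omega

variable {D D' : Set (List ℕ)}

theorem concatDomain_subset_linWords (hD : D ⊆ LinWords n) (hD' : D' ⊆ LinWords n') :
    ConcatDomain n D D' ⊆ LinWords (n + n') := by
  rintro _ ⟨σ, hσ, τ, hτ, rfl⟩
  exact concatWord_mem_linWords (hD hσ) (hD' hτ)

/- For a triple meeting both blocks, every element of the first block is worse than every
element of the second, so `j` is never worst (if `i ≤ n < j`) or never best (if `j ≤ n < k`). -/
theorem isPeakPit_concatDomain (hD : D ⊆ LinWords n) (hpp : IsPeakPit n D)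
    (hpp' : IsPeakPit n' D') :
    IsPeakPit (n + n') (ConcatDomain n D D') := by
  intro i j k hi hij hjk hk
  rcases le_or_gt k n with hkn | hkn
  · refine (hpp i j k hi hij hjk hkn).imp ?_ ?_ <;> rintro h _ ⟨σ, hσ, τ, -, rfl⟩
    · rw [ltIn_concatWord_of_le (hD hσ) (by omega) (by omega) hi (by omega),
        ltIn_concatWord_of_le (hD hσ) (by omega) (by omega) (by omega) hkn]
      exact h σ hσ
    · rw [ltIn_concatWord_of_le (hD hσ) hi (by omega) (by omega) (by omega),
        ltIn_concatWord_of_le (hD hσ) (by omega) hkn (by omega) (by omega)]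
      exact h σ hσ
  rcases le_or_gt j n with hjn | hjn
  · right; rintro _ ⟨σ, hσ, τ, -, rfl⟩ h
    exact not_ltIn_concatWord_of_le_of_lt (hD hσ) (by omega) hjn hkn h.2
  rcases le_or_gt i n with hin | hin
  · left; rintro _ ⟨σ, hσ, τ, -, rfl⟩ h
    exact not_ltIn_concatWord_of_le_of_lt (hD hσ) hi hin hjn h.1
  refine (hpp' (i - n) (j - n) (k - n) (by omega) (by omega) (by omega) (by omega)).imp ?_ ?_ <;>
    rintro h _ ⟨σ, hσ, τ, hτ, rfl⟩
  · rw [ltIn_concatWord_of_lt (hD hσ) hjn hin, ltIn_concatWord_of_lt (hD hσ) hjn hkn]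
    exact h τ hτ
  · rw [ltIn_concatWord_of_lt (hD hσ) hin hjn, ltIn_concatWord_of_lt (hD hσ) hkn hjn]
    exact h τ hτ

theorem ncard_concatDomain (hD : D ⊆ LinWords n) :
    (ConcatDomain n D D').ncard = D.ncard * D'.ncard := by
  have himage : ConcatDomain n D D' = (fun p => concatWord n p.1 p.2) '' (D ×ˢ D') := by
    ext l
    constructor
    · rintro ⟨σ, hσ, τ, hτ, rfl⟩; exact ⟨(σ, τ), ⟨hσ, hτ⟩, rfl⟩
    · rintro ⟨⟨σ, τ⟩, ⟨hσ, hτ⟩, rfl⟩; exact ⟨σ, hσ, τ, hτ, rfl⟩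
  have hinj : Set.InjOn (fun p => concatWord n p.1 p.2) (D ×ˢ D') := by
    rintro ⟨σ, τ⟩ ⟨hσ, -⟩ ⟨σ', τ'⟩ ⟨hσ', -⟩ heq
    have hlen : σ.length = σ'.length := by
      rw [length_of_mem_linWords (hD hσ), length_of_mem_linWords (hD hσ')]
    obtain ⟨hσσ', hττ'⟩ := List.append_inj heq hlen
    exact Prod.ext hσσ' (List.map_injective_iff.2 (add_left_injective n) hττ')
  rw [himage, hinj.ncard_image, Set.ncard_prod]

end Concat

theorem bddAbove_peakPit_ncards (n : ℕ) :
    BddAbove {m | ∃ D : Set (List ℕ), D ⊆ LinWords n ∧ IsPeakPit n D ∧ D.ncard = m} := by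
  refine ⟨(LinWords n).ncard, ?_⟩
  rintro m ⟨D, hD, -, rfl⟩
  exact Set.ncard_le_ncard hD (linWords_finite n)

theorem ncard_le_gamma {n : ℕ} {D : Set (List ℕ)} (hD : D ⊆ LinWords n) (hpp : IsPeakPit n D) :
    D.ncard ≤ gamma n :=
  le_csSup (bddAbove_peakPit_ncards n) ⟨D, hD, hpp, rfl⟩

theorem exists_peakPit_ncard_eq_gamma (n : ℕ) :
    ∃ D : Set (List ℕ), D ⊆ LinWords n ∧ IsPeakPit n D ∧ D.ncard = gamma n := by
  have hempty : IsPeakPit n ∅ := fun _ _ _ _ _ _ _ => Or.inl fun _ h => h.elim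
  exact Nat.sSup_mem (s := {m | ∃ D, D ⊆ LinWords n ∧ IsPeakPit n D ∧ D.ncard = m})
    ⟨0, ∅, Set.empty_subset _, hempty, Set.ncard_empty _⟩ (bddAbove_peakPit_ncards n)

theorem statement_13_general (n n' : ℕ) :
    gamma n * gamma n' ≤ gamma (n + n') := by
  obtain ⟨D, hD, hpp, hcard⟩ := exists_peakPit_ncard_eq_gamma n
  obtain ⟨D', hD', hpp', hcard'⟩ := exists_peakPit_ncard_eq_gamma n'
  calc gamma n * gamma n' = (ConcatDomain n D D').ncard := by
        rw [ncard_concatDomain hD, hcard, hcard']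
    _ ≤ gamma (n + n') :=
        ncard_le_gamma (concatDomain_subset_linWords hD hD') (isPeakPit_concatDomain hD hpp hpp')

/-- `γ_n · γ_{n'} ≤ γ_{n+n'}` for the maximum sizes of peak-pit domains. -/
theorem statement_13 (n n' : ℕ) (hn : 1 ≤ n) (hn' : 1 ≤ n') :
    gamma n * gamma n' ≤ gamma (n + n') :=
  statement_13_general n n'
end

section
/- For every n, Fishburn's domain F_n (the set of linear orders defined by the alternating scheme) contains the orders α = 1<2<...<n and ω = n<...<2<1, is a peak-pit domain, and in particular is a Condorcet domain (acyclic). -/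
/-!
In a cyclic triple each of the three alternatives is the worst of the triple in one order of
the domain and the best in another. For the alternative lying numerically between the other
two this violates both the peak and the pit condition, so peak-pit domains are acyclic.
Fishburn's domain imposes on every triple the peak or the pit condition, according to the
parity of the middle alternative, and in `α` and `ω` the middle alternative of every triple
is neither worst nor best.
-/

namespace List

theorem idxOf_range'_of_mem {s n x : ℕ} (hx : x ∈ range' s n) : (range' s n).idxOf x = x - s := by
  rw [mem_range'_1] at hx
  obtain ⟨t, rfl⟩ := Nat.exists_eq_add_of_le hx.1
  simpa using get_idxOf nodup_range' ⟨t, by rw [length_range']; omega⟩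

theorem idxOf_reverse_range'_of_mem {s n x : ℕ} (hx : x ∈ range' s n) :
    (range' s n).reverse.idxOf x = s + n - 1 - x := by
  rw [mem_range'_1] at hx
  obtain ⟨t, ht, rfl⟩ : ∃ t < n, x = s + (n - 1 - t) := ⟨s + n - 1 - x, by omega, by omega⟩
  have := get_idxOf (nodup_reverse.mpr (nodup_range' (s := s) (n := n))) ⟨t, by simpa using ht⟩
  simp only [get_eq_getElem, getElem_reverse, getElem_range', length_range', one_mul] at this
  rw [this]
  omega

end List

section LinearOrders

variable {σ : List ℕ} {s n a b c : ℕ}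

theorem ltIn_range'_iff (ha : a ∈ List.range' s n) (hb : b ∈ List.range' s n) :
    ltIn (List.range' s n) a b ↔ a < b := by
  rw [ltIn, List.idxOf_range'_of_mem ha, List.idxOf_range'_of_mem hb]
  rw [List.mem_range'_1] at ha hb
  omega

theorem ltIn_reverse_range'_iff (ha : a ∈ List.range' s n) (hb : b ∈ List.range' s n) :
    ltIn (List.range' s n).reverse a b ↔ b < a := by
  rw [ltIn, List.idxOf_reverse_range'_of_mem ha, List.idxOf_reverse_range'_of_mem hb]
  rw [List.mem_range'_1] at ha hb
  omega

theorem ltIn_trans (hab : ltIn σ a b) (hbc : ltIn σ b c) : ltIn σ a c :=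
  Nat.lt_trans hab hbc

theorem mem_of_ltIn (h : ltIn σ a b) : a ∈ σ :=
  List.idxOf_lt_length_iff.mp (h.trans_le List.idxOf_le_length)

end LinearOrders

namespace CyclicTriple

variable {D : Set (List ℕ)} {i j k : ℕ}

theorem rotate (h : CyclicTriple D i j k) : CyclicTriple D j k i := by
  obtain ⟨σ₁, h₁, σ₂, h₂, σ₃, h₃, hσ₁, hσ₂, hσ₃⟩ := h
  exact ⟨σ₂, h₂, σ₃, h₃, σ₁, h₁, hσ₂, hσ₃, hσ₁⟩

theorem exists_worst_and_exists_best (h : CyclicTriple D i j k) :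
    (∃ σ ∈ D, ltIn σ j i ∧ ltIn σ j k) ∧ (∃ σ ∈ D, ltIn σ i j ∧ ltIn σ k j) := by
  obtain ⟨-, -, σ₂, h₂, σ₃, h₃, -, ⟨hjk, hki⟩, ⟨hki', hij⟩⟩ := h
  exact ⟨⟨σ₂, h₂, ltIn_trans hjk hki, hjk⟩, ⟨σ₃, h₃, hij, ltIn_trans hki' hij⟩⟩

theorem false_of_isPeakPit_of_between {n : ℕ} (hD : D ⊆ LinWords n) (hpp : IsPeakPit n D)
    (h : CyclicTriple D i j k) (hj : i < j ∧ j < k ∨ k < j ∧ j < i) : False := by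
  obtain ⟨⟨σ, hσ, hσi, hσk⟩, ⟨τ, hτ, hτi, hτk⟩⟩ := h.exists_worst_and_exists_best
  have hi := List.mem_range'_1.mp ((hD hτ).mem_iff.mp (mem_of_ltIn hτi))
  have hk := List.mem_range'_1.mp ((hD hτ).mem_iff.mp (mem_of_ltIn hτk))
  rcases hj with ⟨hij, hjk⟩ | ⟨hkj, hji⟩
  · rcases hpp i j k (by omega) hij hjk (by omega) with hpeak | hpit
    · exact hpeak σ hσ ⟨hσi, hσk⟩
    · exact hpit τ hτ ⟨hτi, hτk⟩
  · rcases hpp k j i (by omega) hkj hji (by omega) with hpeak | hpit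
    · exact hpeak σ hσ ⟨hσk, hσi⟩
    · exact hpit τ hτ ⟨hτk, hτi⟩

theorem false_of_isPeakPit {n : ℕ} (hD : D ⊆ LinWords n) (hpp : IsPeakPit n D)
    (h : CyclicTriple D i j k) (hij : i ≠ j) (hjk : j ≠ k) (hik : i ≠ k) : False := by
  rcases (by omega : (i < j ∧ j < k ∨ k < j ∧ j < i) ∨ (j < k ∧ k < i ∨ i < k ∧ k < j) ∨
      (k < i ∧ i < j ∨ j < i ∧ i < k)) with hj | hk | hi
  · exact h.false_of_isPeakPit_of_between hD hpp hj
  · exact h.rotate.false_of_isPeakPit_of_between hD hpp hk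
  · exact h.rotate.rotate.false_of_isPeakPit_of_between hD hpp hi

end CyclicTriple

theorem IsPeakPit.not_isCyclicDom {n : ℕ} {D : Set (List ℕ)} (hD : D ⊆ LinWords n)
    (hpp : IsPeakPit n D) : ¬ IsCyclicDom D := by
  rintro ⟨i, j, k, hij, hjk, hik, h | h⟩
  · exact h.false_of_isPeakPit hD hpp hij hjk hik
  · exact h.false_of_isPeakPit hD hpp hjk.symm hij.symm hik.symm

section Fishburn

variable {n : ℕ}

theorem fishburn_subset_linWords : Fishburn n ⊆ LinWords n := fun _ hσ => hσ.1

theorem range'_mem_fishburn : List.range' 1 n ∈ Fishburn n := by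
  have mem : ∀ x, 1 ≤ x → x ≤ n → x ∈ List.range' 1 n := fun x h₁ h₂ =>
    List.mem_range'_1.mpr ⟨h₁, by omega⟩
  refine ⟨List.Perm.refl _, fun i j k hi hij hjk hk => ⟨fun _ h => ?_, fun _ h => ?_⟩⟩
  · have := (ltIn_range'_iff (mem j (by omega) (by omega)) (mem i hi (by omega))).mp h.1
    omega
  · have := (ltIn_range'_iff (mem k (by omega) hk) (mem j (by omega) (by omega))).mp h.2
    omega

theorem reverse_range'_mem_fishburn : (List.range' 1 n).reverse ∈ Fishburn n := by
  have mem : ∀ x, 1 ≤ x → x ≤ n → x ∈ List.range' 1 n := fun x h₁ h₂ =>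
    List.mem_range'_1.mpr ⟨h₁, by omega⟩
  refine ⟨List.reverse_perm _, fun i j k hi hij hjk hk => ⟨fun _ h => ?_, fun _ h => ?_⟩⟩
  · have := (ltIn_reverse_range'_iff (mem j (by omega) (by omega)) (mem k (by omega) hk)).mp h.2
    omega
  · have := (ltIn_reverse_range'_iff (mem i hi (by omega)) (mem j (by omega) (by omega))).mp h.1
    omega

theorem fishburn_isPeakPit : IsPeakPit n (Fishburn n) := by
  intro i j k hi hij hjk hk
  rcases Nat.even_or_odd j with heven | hodd
  · exact Or.inl fun σ hσ => (hσ.2 i j k hi hij hjk hk).1 heven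
  · exact Or.inr fun σ hσ => (hσ.2 i j k hi hij hjk hk).2 hodd

end Fishburn

/-- Fishburn's domain contains `α` and `ω`, is a peak-pit domain, and
in particular is a Condorcet domain (acyclic). -/
theorem statement_14 (n : ℕ) :
    List.range' 1 n ∈ Fishburn n ∧ (List.range' 1 n).reverse ∈ Fishburn n ∧
    IsPeakPit n (Fishburn n) ∧ ¬ IsCyclicDom (Fishburn n) :=
  ⟨range'_mem_fishburn, reverse_range'_mem_fishburn, fishburn_isPeakPit,
    fishburn_isPeakPit.not_isCyclicDom fishburn_subset_linWords⟩
end
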